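/- arXiv:1907.09106 — 2 statements merged into one kernel-verified Lean document; each statement's English description precedes it below -/
import Mathlib

section
/- For every k ≥ 0, every player i, and every σ ∈ Σ_i: σ ∈ NSD^k_i (i.e., σ survives k rounds of iterated deletion of strongly dominated strategies) if and only if there exist a probability structure M appropriate for Γ and a state ω of M such that strat_i(ω) = σ and ω ∈ RAT^k_i(M). Moreover, when σ ∈ NSD^k_i, the structure M can be taken to be finite with every subset of Ω measurable. -/
open scoped BigOperators

noncomputable section

/-- A probability distribution on a finite type, represented as a weight function. -/
def IsDist {α : Type*} [Fintype α] (p : α → ℝ) : Prop :=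
  (∀ a, 0 ≤ p a) ∧ ∑ a, p a = 1

/-- The probability of a set under a weight function. -/
def probOf {α : Type*} [Fintype α] (p : α → ℝ) (E : Set α) : ℝ :=
  ∑ a, E.indicator p a

/-- A finite normal-form game with `n` players, all utilities in `[0,1]`. -/
structure Game (n : ℕ) where
  S : Fin n → Type
  fintypeS : ∀ i, Fintype (S i)
  decEqS : ∀ i, DecidableEq (S i)
  nonemptyS : ∀ i, Nonempty (S i)
  u : (i : Fin n) → ((j : Fin n) → S j) → ℝ
  u_mem : ∀ i σ, u i σ ∈ Set.Icc (0 : ℝ) 1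

attribute [instance] Game.fintypeS Game.decEqS Game.nonemptyS

namespace Game

variable {n : ℕ}

abbrev Prof (G : Game n) : Type := (j : Fin n) → G.S j

abbrev OppProf (G : Game n) (i : Fin n) : Type := (j : {j : Fin n // j ≠ i}) → G.S j.val

def stratOpp (G : Game n) (i : Fin n) (σ : G.Prof) : G.OppProf i := fun j => σ j.val

def combine (G : Game n) (i : Fin n) (s : G.S i) (τ : G.OppProf i) : G.Prof :=
  fun j => if h : j = i then cast (congrArg G.S h.symm) s else τ ⟨j, h⟩

/-- Expected utility of strategy `s` of player `i` under belief `b` on opponents' profiles. -/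
def EU (G : Game n) (i : Fin n) (s : G.S i) (b : G.OppProf i → ℝ) : ℝ :=
  ∑ τ : G.OppProf i, b τ * G.u i (G.combine i s τ)

/-- `s` is a best response to the belief `b`. -/
def BR (G : Game n) (i : Fin n) (s : G.S i) (b : G.OppProf i → ℝ) : Prop :=
  ∀ s' : G.S i, G.EU i s' b ≤ G.EU i s b

/-- Utility of mixed strategy `m` of player `i` against opponents' profile `τ`. -/
def EUmix (G : Game n) (i : Fin n) (m : G.S i → ℝ) (τ : G.OppProf i) : ℝ :=
  ∑ s : G.S i, m s * G.u i (G.combine i s τ)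

/-- `s` is weakly dominated by the mixed strategy `m` with respect to `T`. -/
def WDom (G : Game n) (i : Fin n) (m : G.S i → ℝ) (s : G.S i)
    (T : Set (G.OppProf i)) : Prop :=
  (∀ τ ∈ T, G.u i (G.combine i s τ) ≤ G.EUmix i m τ) ∧
    ∃ τ ∈ T, G.u i (G.combine i s τ) < G.EUmix i m τ

/-- `s` is strongly dominated by the mixed strategy `m` with respect to `T`. -/
def SDom (G : Game n) (i : Fin n) (m : G.S i → ℝ) (s : G.S i)
    (T : Set (G.OppProf i)) : Prop :=
  ∀ τ ∈ T, G.u i (G.combine i s τ) < G.EUmix i m τ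

/-- Strategies of player `i` surviving `k` rounds of iterated deletion of weakly
dominated strategies. -/
def NWD (G : Game n) : ℕ → (i : Fin n) → Set (G.S i)
  | 0 => fun _ => Set.univ
  | k + 1 => fun i =>
      {s | s ∈ NWD G k i ∧
        ¬∃ m : G.S i → ℝ, IsDist m ∧
          G.WDom i m s {τ : G.OppProf i | ∀ j, τ j ∈ NWD G k j.val}}

/-- Strategies of player `i` surviving `k` rounds of iterated deletion of strongly
dominated strategies. -/
def NSD (G : Game n) : ℕ → (i : Fin n) → Set (G.S i)
  | 0 => fun _ => Set.univ
  | k + 1 => fun i =>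
      {s | s ∈ NSD G k i ∧
        ¬∃ m : G.S i → ℝ, IsDist m ∧
          G.SDom i m s {τ : G.OppProf i | ∀ j, τ j ∈ NSD G k j.val}}

end Game

open MeasureTheory in
/-- A probability structure appropriate for the game `G`. -/
structure PStruct {n : ℕ} (G : Game n) where
  Ω : Type
  meas : MeasurableSpace Ω
  strat : Ω → G.Prof
  PR : Fin n → Ω → @Measure Ω meas
  PR_prob : ∀ i ω, @IsProbabilityMeasure Ω meas (PR i ω)
  strat_meas : ∀ (j : Fin n) (s : G.S j), MeasurableSet[meas] {ω | strat ω j = s}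
  PR_own_strat : ∀ i ω, PR i ω {ω' | strat ω' i = strat ω i} = 1
  PR_meas : ∀ (i : Fin n) (π : @Measure Ω meas), MeasurableSet[meas] {ω | PR i ω = π}
  PR_own_PR : ∀ i ω, PR i ω {ω' | PR i ω' = PR i ω} = 1

namespace PStruct

variable {n : ℕ} {G : Game n}

/-- The belief on opponents' strategy profiles induced by `PR i ω`. -/
def belief (M : PStruct G) (i : Fin n) (ω : M.Ω) : G.OppProf i → ℝ :=
  fun τ => (M.PR i ω {ω' | G.stratOpp i (M.strat ω') = τ}).toReal

/-- `(M,ω) ⊨ RAT_i`. -/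
def RATi (M : PStruct G) (i : Fin n) (ω : M.Ω) : Prop :=
  G.BR i (M.strat ω i) (M.belief i ω)

/-- `(M,ω) ⊨ B_i E`. -/
def Bel (M : PStruct G) (i : Fin n) (ω : M.Ω) (E : Set M.Ω) : Prop :=
  ∃ F, @MeasurableSet M.Ω M.meas F ∧ F ⊆ E ∧ M.PR i ω F = 1

/-- `(M,ω) ⊨ ⟨B_i⟩ E`. -/
def BelPos (M : PStruct G) (i : Fin n) (ω : M.Ω) (E : Set M.Ω) : Prop :=
  ∃ F, @MeasurableSet M.Ω M.meas F ∧ F ⊆ E ∧ 0 < M.PR i ω F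

end PStruct

/-- The events `RATzero^k_i(M)`, defined simultaneously for all appropriate structures. -/
def RATzero {n : ℕ} (G : Game n) : (k : ℕ) → (M : PStruct G) → Fin n → Set M.Ω
  | 0, _, _ => Set.univ
  | k + 1, M, i =>
      {ω | M.RATi i ω ∧
        M.Bel i ω {ω' | ∃ M' : PStruct G, ∃ ω'' : M'.Ω,
          M'.strat ω'' i = M.strat ω' i ∧ ω'' ∈ RATzero G k M' i} ∧
        M.Bel i ω {ω' | ∀ j, j ≠ i → ω' ∈ RATzero G k M j} ∧
        ∀ j, j ≠ i → ∀ s : G.S j,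
          (∃ M' : PStruct G, ∃ ω' : M'.Ω, M'.strat ω' j = s ∧
              ∀ j', j' ≠ i → ω' ∈ RATzero G k M' j') →
            M.BelPos i ω {ω'' | M.strat ω'' j = s}}

/-- The events `RAT^k_i(M)`. -/
def RATk {n : ℕ} (G : Game n) (M : PStruct G) : (k : ℕ) → Fin n → Set M.Ω
  | 0, _ => Set.univ
  | k + 1, i => {ω | M.RATi i ω ∧ M.Bel i ω {ω' | ∀ j, j ≠ i → ω' ∈ RATk G M k j}}

/-- The event that every player is rational. -/
def RATall {n : ℕ} {G : Game n} (M : PStruct G) : Set M.Ω := {ω | ∀ j, M.RATi j ω}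

/-- The "everyone believes" operator iterated `k` times. -/
def Ek {n : ℕ} {G : Game n} (M : PStruct G) : ℕ → Set M.Ω → Set M.Ω
  | 0, X => X
  | k + 1, X => {ω | ∀ j, M.Bel j ω (Ek M k X)}

/-- `σ` is a rationalizable strategy for player `i`. -/
def Rationalizable {n : ℕ} (G : Game n) (i : Fin n) (σ : G.S i) : Prop :=
  ∃ Z : (j : Fin n) → Set (G.S j),
    σ ∈ Z i ∧
    ∀ j, ∀ σ' ∈ Z j, ∃ μ : G.OppProf j → ℝ, IsDist μ ∧
      (∀ τ, 0 < μ τ → ∀ j', τ j' ∈ Z j'.val) ∧ G.BR j σ' μ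

/-- `σ` is rationalizable′ for player `i`. -/
def Rationalizable' {n : ℕ} (G : Game n) (i : Fin n) (σ : G.S i) : Prop :=
  ∃ X : ℕ → (j : Fin n) → Set (G.S j),
    (∀ j, X 0 j = Set.univ) ∧
    (∀ (k : ℕ) (j : Fin n), ∀ σ' ∈ X (k + 1) j, ∃ μ : G.OppProf j → ℝ, IsDist μ ∧
      (∀ τ, 0 < μ τ → ∀ j', τ j' ∈ X k j'.val) ∧ G.BR j σ' μ) ∧
    ∀ k, σ ∈ X k i

end

/-!
Soundness: at a state of `RAT^(k+1)_i` player `i` best-responds to her induced belief, which is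
concentrated on states where every opponent is in `RAT^k`, so (by induction) on profiles from
`NSD^k`; a best response to a belief supported on a set `T` of profiles cannot be strongly
dominated relative to `T`. Completeness rests on the converse, a consequence of the minimax
theorem: a strategy that is not strongly dominated relative to `T` is a best response to some
belief supported on `T`. In the canonical finite structure a state gives each player a strategy and
a level `ℓ ≤ k`; a player of level `ℓ + 1` whose strategy lies in `NSD^(ℓ+1)` holds such a
justifying belief about the others, placing them at level `ℓ` with strategies from `NSD^ℓ`.
-/

noncomputable section

open Matrix MeasureTheory

theorem Matrix.exists_mem_stdSimplex_mulVec_nonpos_iff {ι κ : Type*} [Fintype ι] [Fintype κ]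
    [Nonempty ι] (A : Matrix ι κ ℝ) (T : Set κ) :
    (∃ μ ∈ stdSimplex ℝ κ, (∀ τ, 0 < μ τ → τ ∈ T) ∧ ∀ s, (A *ᵥ μ) s ≤ 0) ↔
      ∀ m ∈ stdSimplex ℝ ι, ∃ τ ∈ T, (m ᵥ* A) τ ≤ 0 := by
  classical
  constructor
  · rintro ⟨μ, hμ, hμT, hA⟩ m hm
    by_contra! hmA
    have hle : m ⬝ᵥ A *ᵥ μ ≤ 0 :=
      Finset.sum_nonpos fun s _ => mul_nonpos_of_nonneg_of_nonpos (hm.1 s) (hA s)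
    obtain ⟨τ, -, hτ⟩ := Finset.exists_lt_of_sum_lt (s := Finset.univ) (f := 0) (g := μ)
      (by simp [hμ.2])
    have hpos : 0 < m ᵥ* A ⬝ᵥ μ := by
      refine Finset.sum_pos' (fun τ _ => ?_) ⟨τ, Finset.mem_univ τ, mul_pos (hmA τ (hμT τ hτ)) hτ⟩
      rcases (hμ.1 τ).eq_or_lt with h | h
      · simp [← h]
      · exact (mul_pos (hmA τ (hμT τ h)) h).le
    rw [dotProduct_mulVec] at hle
    linarith
  · intro h
    let X := stdSimplex ℝ κ ∩ {μ | ∀ τ ∉ T, μ τ = 0}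
    have single_mem_X : ∀ τ ∈ T, Pi.single τ 1 ∈ X := fun τ hτ =>
      ⟨single_mem_stdSimplex ℝ τ, fun τ' hτ' =>
        Pi.single_eq_of_ne (ne_of_mem_of_not_mem hτ hτ').symm _⟩
    have hX : Convex ℝ X := (convex_stdSimplex ℝ κ).inter fun x hx y hy a b _ _ _ τ hτ => by
      simp [hx τ hτ, hy τ hτ]
    have hXc : IsCompact X := (isCompact_stdSimplex ℝ κ).inter_right <| by
      simp only [Set.ofPred_forall]
      exact isClosed_iInter fun τ => isClosed_iInter fun _ =>
        isClosed_eq (continuous_apply τ) continuous_const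
    obtain ⟨τ, hτT, -⟩ := h _ (single_mem_stdSimplex ℝ (Classical.arbitrary ι))
    -- a saddle point of `m ⬝ᵥ A *ᵥ μ` on mixed strategies × beliefs supported on `T`
    let B : (ι → ℝ) →ₗ[ℝ] (κ → ℝ) →ₗ[ℝ] ℝ := toLinearMap₂' ℝ A
    obtain ⟨a, ⟨ha, haT⟩, b, hb, hab⟩ := Sion.exists_isSaddlePointOn (f := fun μ m => B m μ)
      ⟨_, single_mem_X τ hτT⟩ hX hXc
      (fun m _ => (B m).continuous_of_finiteDimensional.lowerSemicontinuous.lowerSemicontinuousOn _)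
      (fun m _ => ((B m).convexOn hX).quasiconvexOn)
      (convex_stdSimplex ℝ ι) ⟨_, single_mem_stdSimplex ℝ (Classical.arbitrary ι)⟩
      (isCompact_stdSimplex ℝ ι)
      (fun μ _ =>
        (B.flip μ).continuous_of_finiteDimensional.upperSemicontinuous.upperSemicontinuousOn _)
      (fun μ _ => ((B.flip μ).concaveOn (convex_stdSimplex ℝ ι)).quasiconcaveOn)
    obtain ⟨τ₀, hτ₀T, hτ₀⟩ := h b hb
    refine ⟨a, ha, fun τ hτ => by_contra fun hτT => hτ.ne' (haT τ hτT), fun s => ?_⟩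
    have hsaddle : B (Pi.single s 1) a ≤ B b (Pi.single τ₀ 1) :=
      hab _ (single_mem_X τ₀ hτ₀T) _ (single_mem_stdSimplex ℝ s)
    rw [toLinearMap₂'_apply', toLinearMap₂'_apply', single_dotProduct, dotProduct_mulVec,
      dotProduct_single, one_mul, mul_one] at hsaddle
    linarith

theorem isDist_iff_mem_stdSimplex {α : Type*} [Fintype α] {p : α → ℝ} :
    IsDist p ↔ p ∈ stdSimplex ℝ α :=
  Iff.rfl

def IsDist.toPMF {α : Type*} [Fintype α] {p : α → ℝ} (hp : IsDist p) : PMF α :=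
  PMF.ofFintype (fun a => ENNReal.ofReal (p a)) <| by
    rw [← ENNReal.ofReal_sum_of_nonneg fun a _ => hp.1 a, hp.2, ENNReal.ofReal_one]

theorem IsDist.toPMF_apply {α : Type*} [Fintype α] {p : α → ℝ} (hp : IsDist p) (a : α) :
    hp.toPMF a = ENNReal.ofReal (p a) :=
  rfl

theorem IsDist.support_toPMF {α : Type*} [Fintype α] {p : α → ℝ} (hp : IsDist p) :
    hp.toPMF.support = {a | 0 < p a} := by
  ext a
  simp [IsDist.toPMF, PMF.support_ofFintype]

namespace Game

variable {n : ℕ} (G : Game n)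

def gainMatrix (i : Fin n) (s : G.S i) : Matrix (G.S i) (G.OppProf i) ℝ :=
  fun s' τ => G.u i (G.combine i s' τ) - G.u i (G.combine i s τ)

theorem mulVec_gainMatrix (i : Fin n) (s s' : G.S i) (μ : G.OppProf i → ℝ) :
    (G.gainMatrix i s *ᵥ μ) s' = G.EU i s' μ - G.EU i s μ := by
  simp only [mulVec, dotProduct, gainMatrix, EU, ← Finset.sum_sub_distrib]
  exact Finset.sum_congr rfl fun τ _ => by ring

theorem vecMul_gainMatrix (i : Fin n) (s : G.S i) {m : G.S i → ℝ} (hm : ∑ s', m s' = 1)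
    (τ : G.OppProf i) :
    (m ᵥ* G.gainMatrix i s) τ = G.EUmix i m τ - G.u i (G.combine i s τ) := by
  simp only [vecMul, dotProduct, gainMatrix, EUmix, mul_sub, Finset.sum_sub_distrib,
    ← Finset.sum_mul, hm, one_mul]

theorem exists_br_iff_not_sdom (i : Fin n) (s : G.S i) (T : Set (G.OppProf i)) :
    (∃ μ, IsDist μ ∧ (∀ τ, 0 < μ τ → τ ∈ T) ∧ G.BR i s μ) ↔
      ¬∃ m, IsDist m ∧ G.SDom i m s T := by
  have hBR : ∀ μ, G.BR i s μ ↔ ∀ s', (G.gainMatrix i s *ᵥ μ) s' ≤ 0 := fun μ => by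
    simp only [BR, mulVec_gainMatrix, sub_nonpos]
  simp only [hBR, isDist_iff_mem_stdSimplex, Matrix.exists_mem_stdSimplex_mulVec_nonpos_iff, SDom]
  push Not
  refine forall₂_congr fun m hm => ?_
  simp only [vecMul_gainMatrix G i s hm.2, sub_nonpos]

end Game

namespace PStruct

attribute [local instance] PStruct.meas PStruct.PR_prob

variable {n : ℕ} {G : Game n} (M : PStruct G)

theorem measurableSet_stratOpp_eq (i : Fin n) (τ : G.OppProf i) :
    MeasurableSet {ω | G.stratOpp i (M.strat ω) = τ} := by
  have h : {ω | G.stratOpp i (M.strat ω) = τ} = ⋂ j, {ω | M.strat ω j.val = τ j} := by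
    ext ω
    simp only [Set.mem_iInter, Set.mem_ofPred_eq]
    exact funext_iff
  rw [h]
  exact .iInter fun j => M.strat_meas j.val (τ j)

theorem belief_isDist (i : Fin n) (ω : M.Ω) : IsDist (M.belief i ω) := by
  refine ⟨fun τ => ENNReal.toReal_nonneg, ?_⟩
  have h := sum_measure_preimage_singleton (μ := M.PR i ω)
    (f := fun ω => G.stratOpp i (M.strat ω)) Finset.univ
    fun τ _ => M.measurableSet_stratOpp_eq i τ
  rw [Finset.coe_univ, Set.preimage_univ, measure_univ] at h
  calc ∑ τ, M.belief i ω τ = (∑ τ, M.PR i ω {ω' | G.stratOpp i (M.strat ω') = τ}).toReal :=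
        (ENNReal.toReal_sum fun τ _ => measure_ne_top _ _).symm
    _ = 1 := by rw [← ENNReal.toReal_one, ← h]; rfl

theorem exists_mem_stratOpp_eq_of_belief_pos {i : Fin n} {ω : M.Ω} {F : Set M.Ω}
    (hF : MeasurableSet F) (hF1 : M.PR i ω F = 1) {τ : G.OppProf i}
    (hτ : 0 < M.belief i ω τ) : ∃ ω' ∈ F, G.stratOpp i (M.strat ω') = τ := by
  by_contra! h
  have hsub : {ω' | G.stratOpp i (M.strat ω') = τ} ⊆ Fᶜ := fun ω' hω' hω'F => h ω' hω'F hω'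
  have hnull := measure_mono_null hsub ((prob_compl_eq_zero_iff hF).2 hF1)
  exact hτ.ne' (by simp [belief, hnull])

end PStruct

theorem RATk_succ_subset {n : ℕ} {G : Game n} (M : PStruct G) :
    ∀ (k : ℕ) (i : Fin n), RATk G M (k + 1) i ⊆ RATk G M k i
  | 0, _, _, _ => trivial
  | k + 1, _, _, ⟨hrat, F, hF, hFE, hF1⟩ =>
    ⟨hrat, F, hF, fun _ hω' j hj => RATk_succ_subset M k j (hFE hω' j hj), hF1⟩

theorem strat_mem_NSD_of_mem_RATk {n : ℕ} {G : Game n} {M : PStruct G} :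
    ∀ {k : ℕ} {i : Fin n} {ω : M.Ω}, ω ∈ RATk G M k i → M.strat ω i ∈ G.NSD k i
  | 0, _, _, _ => trivial
  | k + 1, i, ω, hω => by
    obtain ⟨hrat, F, hF, hFE, hF1⟩ := id hω
    refine ⟨strat_mem_NSD_of_mem_RATk (RATk_succ_subset M k i hω), ?_⟩
    refine (G.exists_br_iff_not_sdom i _ _).1 ⟨M.belief i ω, M.belief_isDist i ω, ?_, hrat⟩
    intro τ hτ j
    obtain ⟨ω', hω'F, rfl⟩ := M.exists_mem_stratOpp_eq_of_belief_pos hF hF1 hτ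
    exact strat_mem_NSD_of_mem_RATk (hFE hω'F j j.prop)

namespace Game

variable {n : ℕ} (G : Game n)

open Classical in
/-- The point mass in the junk case makes the beliefs of every type a probability measure. -/
def rationale (j : Fin n) (m : ℕ) (s : G.S j) : G.OppProf j → ℝ :=
  if h : s ∈ G.NSD (m + 1) j then Classical.choose ((G.exists_br_iff_not_sdom j s _).2 h.2)
  else Pi.single (Classical.arbitrary _) 1

theorem rationale_isDist (j : Fin n) (m : ℕ) (s : G.S j) : IsDist (G.rationale j m s) := by
  unfold rationale
  split_ifs with h
  · exact (Classical.choose_spec ((G.exists_br_iff_not_sdom j s _).2 h.2)).1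
  · exact single_mem_stdSimplex ℝ _

theorem rationale_spec {j : Fin n} {m : ℕ} {s : G.S j} (h : s ∈ G.NSD (m + 1) j) :
    (∀ τ, 0 < G.rationale j m s τ → ∀ j', τ j' ∈ G.NSD m j'.val) ∧
      G.BR j s (G.rationale j m s) := by
  rw [rationale, dif_pos h]
  exact (Classical.choose_spec ((G.exists_br_iff_not_sdom j s _).2 h.2)).2

end Game

def CanonState {n : ℕ} (G : Game n) (k : ℕ) : Type := (j : Fin n) → G.S j × Fin (k + 1)

namespace CanonState

variable {n : ℕ} {G : Game n} {k : ℕ}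

instance : Finite (CanonState G k) :=
  inferInstanceAs (Finite ((j : Fin n) → G.S j × Fin (k + 1)))

instance : MeasurableSpace (CanonState G k) := ⊤

instance : DiscreteMeasurableSpace (CanonState G k) := ⟨fun _ => trivial⟩

def next (j : Fin n) (p : G.S j × Fin (k + 1)) (τ : G.OppProf j) : CanonState G k :=
  fun j' => if h : j' = j then h ▸ p else (τ ⟨j', h⟩, ⟨p.2 - 1, by omega⟩)

theorem next_self (j : Fin n) (p : G.S j × Fin (k + 1)) (τ : G.OppProf j) :
    next j p τ j = p := by
  simp [next]

theorem next_of_ne {j j' : Fin n} (h : j' ≠ j) (p : G.S j × Fin (k + 1)) (τ : G.OppProf j) :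
    next j p τ j' = (τ ⟨j', h⟩, ⟨p.2 - 1, by omega⟩) := by
  simp [next, h]

theorem stratOpp_next (j : Fin n) (p : G.S j × Fin (k + 1)) (τ : G.OppProf j) :
    G.stratOpp j (fun j' => (next j p τ j').1) = τ :=
  funext fun j' => by rw [Game.stratOpp, next_of_ne j'.prop]

def typePR (j : Fin n) (p : G.S j × Fin (k + 1)) : Measure (CanonState G k) :=
  ((G.rationale_isDist j (p.2 - 1) p.1).toPMF.map (next j p)).toMeasure

instance (j : Fin n) (p : G.S j × Fin (k + 1)) : IsProbabilityMeasure (typePR j p) := by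
  unfold typePR
  infer_instance

theorem typePR_eq_one {j : Fin n} {p : G.S j × Fin (k + 1)} {E : Set (CanonState G k)}
    (hE : ∀ τ, 0 < G.rationale j (p.2 - 1) p.1 τ → next j p τ ∈ E) : typePR j p E = 1 := by
  rw [typePR, PMF.toMeasure_apply_eq_one_iff _ (.of_discrete), PMF.support_map,
    IsDist.support_toPMF]
  rintro _ ⟨τ, hτ, rfl⟩
  exact hE τ hτ

end CanonState

open CanonState in
/-- `PR j ω` depends on `ω j` only and `next j` keeps that component, whence the introspection
axioms. -/
def canonicalStruct {n : ℕ} (G : Game n) (k : ℕ) : PStruct G where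
  Ω := CanonState G k
  meas := inferInstance
  strat ω j := (ω j).1
  PR j ω := typePR j (ω j)
  PR_prob _ _ := inferInstance
  strat_meas _ _ := .of_discrete
  PR_own_strat j ω := typePR_eq_one fun τ _ => by
    show (next j (ω j) τ j).1 = (ω j).1
    rw [next_self]
  PR_meas _ _ := .of_discrete
  PR_own_PR j ω := typePR_eq_one fun τ _ => by
    show typePR j (next j (ω j) τ j) = typePR j (ω j)
    rw [next_self]

namespace CanonState

variable {n : ℕ} {G : Game n} {k : ℕ}

theorem belief_canonicalStruct (j : Fin n) (ω : CanonState G k) :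
    (canonicalStruct G k).belief j ω = G.rationale j ((ω j).2 - 1) (ω j).1 := by
  funext τ
  have hpre : next j (ω j) ⁻¹' {ω' | G.stratOpp j (fun j' => (ω' j').1) = τ} = {τ} := by
    ext τ'
    simp [stratOpp_next]
  show (typePR j (ω j) {ω' | G.stratOpp j (fun j' => (ω' j').1) = τ}).toReal = _
  rw [typePR, PMF.toMeasure_apply_eq_toOuterMeasure_apply _ (.of_discrete),
    PMF.toOuterMeasure_map_apply, hpre, PMF.toOuterMeasure_apply_singleton,
    IsDist.toPMF_apply, ENNReal.toReal_ofReal ((G.rationale_isDist _ _ _).1 τ)]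

theorem mem_RATk_canonicalStruct :
    ∀ {m : ℕ} {ω : CanonState G k} {j : Fin n}, ((ω j).2 : ℕ) = m → (ω j).1 ∈ G.NSD m j →
      ω ∈ RATk G (canonicalStruct G k) m j
  | 0, _, _, _, _ => trivial
  | m + 1, ω, j, hlevel, hNSD => by
    have hpred : ((ω j).2 : ℕ) - 1 = m := by omega
    obtain ⟨hsupp, hBR⟩ := G.rationale_spec hNSD
    refine ⟨show G.BR j (ω j).1 _ by rwa [belief_canonicalStruct, hpred], ?_⟩
    refine ⟨{ω' | ∀ j' ≠ j, ((ω' j').2 : ℕ) = m ∧ (ω' j').1 ∈ G.NSD m j'},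
      MeasurableSpace.measurableSet_top,
      fun ω' hω' j' hj' => mem_RATk_canonicalStruct (hω' j' hj').1 (hω' j' hj').2, ?_⟩
    refine typePR_eq_one fun τ hτ j' hj' => ?_
    rw [hpred] at hτ
    rw [next_of_ne hj']
    exact ⟨hpred, hsupp τ hτ ⟨j', hj'⟩⟩

end CanonState

end

/-- characterization of `k` rounds of iterated deletion of strongly dominated
strategies via `RAT^k_i`; moreover the structure can be taken finite with every subset
measurable. -/
theorem iterated_strict_dominance_characterization {n : ℕ} (G : Game n) (k : ℕ) (i : Fin n)
    (σ : G.S i) :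
    (σ ∈ Game.NSD G k i ↔
      ∃ (M : PStruct G) (ω : M.Ω), M.strat ω i = σ ∧ ω ∈ RATk G M k i) ∧
    (σ ∈ Game.NSD G k i →
      ∃ (M : PStruct G) (ω : M.Ω), Finite M.Ω ∧ M.meas = ⊤ ∧
        M.strat ω i = σ ∧ ω ∈ RATk G M k i) := by
  have hcanonical : σ ∈ G.NSD k i → ∃ (M : PStruct G) (ω : M.Ω), Finite M.Ω ∧ M.meas = ⊤ ∧
      M.strat ω i = σ ∧ ω ∈ RATk G M k i := fun hσ =>
    let ω := CanonState.next i (σ, Fin.last k) (Classical.arbitrary _)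
    have hω : ω i = (σ, Fin.last k) := CanonState.next_self _ _ _
    ⟨canonicalStruct G k, ω, inferInstanceAs (Finite (CanonState G k)), rfl,
      congrArg Prod.fst hω,
      CanonState.mem_RATk_canonicalStruct (by rw [hω]; rfl) (by rwa [hω])⟩
  refine ⟨⟨fun hσ => ?_, ?_⟩, hcanonical⟩
  · obtain ⟨M, ω, -, -, hω⟩ := hcanonical hσ
    exact ⟨M, ω, hω⟩
  · rintro ⟨M, ω, rfl, hω⟩
    exact strat_mem_NSD_of_mem_RATk hω
end

section
/- Let Σ' = Σ'_i × Σ'_{-i} ⊆ Σ and σ ∈ Σ'_i. Then σ is not conditionally dominated on Σ' if and only if for each information set I of player i, either Σ'_{σ,I,-i} = ∅ or there is a probability distribution μ_{σ,I} on Σ'_{σ,I,-i} such that for every strategy σ' ∈ Σ_i that agrees with σ at every information set of player i preceding I, Σ_{τ_{-i} ∈ Σ'_{σ,I,-i}} μ_{σ,I}(τ_{-i}) u_i(σ, τ_{-i}) ≥ Σ_{τ_{-i} ∈ Σ'_{σ,I,-i}} μ_{σ,I}(τ_{-i}) u_i(σ', τ_{-i}). -/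
open scoped BigOperators

noncomputable section

/-- A lexicographic probability sequence on a finite type. -/
structure LPS (Ω : Type*) [Fintype Ω] where
  m : ℕ
  μ : Fin (m + 1) → Ω → ℝ
  dist : ∀ ℓ, IsDist (μ ℓ)

namespace LPS

variable {Ω : Type*} [Fintype Ω]

open Classical in
/-- `(μ⃗(V | E))₀`: the conditional probability of `V` given `E` under the first measure
of the LPS that gives `E` positive probability (0 if there is none). -/
def condFirst (L : LPS Ω) (V E : Set Ω) : ℝ :=
  if h : ∃ ℓ : ℕ, ∃ hℓ : ℓ < L.m + 1, 0 < probOf (L.μ ⟨ℓ, hℓ⟩) E then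
    probOf (L.μ ⟨Nat.find h, (Nat.find_spec h).choose⟩) (V ∩ E) /
      probOf (L.μ ⟨Nat.find h, (Nat.find_spec h).choose⟩) E
  else 0

/-- Expectation of `f` under the first measure of `μ⃗|E`. -/
def condExp (L : LPS Ω) (E : Set Ω) (f : Ω → ℝ) : ℝ :=
  ∑ a, L.condFirst {a} E * f a

end LPS

/-- The experience of player `i` along a history: the sequence of information-set labels of
`i` visited together with the actions `i` took there. `experGo owner label i pre rest`
processes the history `pre ++ rest`, where `pre` has already been traversed. -/
def experGo {Act Lab ι : Type*} [DecidableEq ι] (owner : List Act → ι)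
    (label : List Act → Lab) (i : ι) : List Act → List Act → List (Lab × Act)
  | _, [] => []
  | pre, a :: rest =>
      (if owner pre = i then [(label pre, a)] else []) ++
        experGo owner label i (pre ++ [a]) rest

/-- A finite extensive-form game with perfect recall for `n` players and no chance moves,
presented via its set of histories (sequences of actions from the root). `owner h` is the
player who moves at a nonterminal history `h`, `label h` is the information set containing
`h`, and `payoff i h` is `i`'s utility at a terminal history `h`. -/
structure ExtGame (n : ℕ) where
  Act : Type
  Lab : Type
  actFin : Fintype Act
  actDeq : DecidableEq Act
  actNe : Nonempty Act
  labFin : Fintype Lab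
  labDeq : DecidableEq Lab
  maxLen : ℕ
  H : Set (List Act)
  root_mem : [] ∈ H
  prefix_closed : ∀ (h : List Act) (a : Act), h ++ [a] ∈ H → h ∈ H
  len_bound : ∀ h ∈ H, h.length ≤ maxLen
  owner : List Act → Fin n
  label : List Act → Lab
  payoff : Fin n → List Act → ℝ
  payoff_mem : ∀ (i : Fin n) (h : List Act), h ∈ H → (∀ a, h ++ [a] ∉ H) →
    payoff i h ∈ Set.Icc (0 : ℝ) 1
  same_owner : ∀ h h', h ∈ H → h' ∈ H → (∃ a, h ++ [a] ∈ H) → (∃ a, h' ++ [a] ∈ H) →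
    label h = label h' → owner h = owner h'
  same_actions : ∀ h h', h ∈ H → h' ∈ H → (∃ a, h ++ [a] ∈ H) → (∃ a, h' ++ [a] ∈ H) →
    label h = label h' → ∀ a, (h ++ [a] ∈ H ↔ h' ++ [a] ∈ H)
  no_two_on_path : ∀ h h', h ∈ H → h' ∈ H → (∃ a, h ++ [a] ∈ H) → (∃ a, h' ++ [a] ∈ H) →
    label h = label h' → h <+: h' → h = h'
  perfect_recall : ∀ h h', h ∈ H → h' ∈ H → (∃ a, h ++ [a] ∈ H) → (∃ a, h' ++ [a] ∈ H) →
    label h = label h' →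
    experGo owner label (owner h) [] h = experGo owner label (owner h) [] h'

attribute [instance] ExtGame.actFin ExtGame.actDeq ExtGame.actNe ExtGame.labFin
  ExtGame.labDeq

namespace ExtGame

variable {n : ℕ}

/-- `h` is a decision node. -/
def Dec (G : ExtGame n) (h : List G.Act) : Prop := h ∈ G.H ∧ ∃ a, h ++ [a] ∈ G.H

/-- `h` is a decision node of player `i`. -/
def DecOf (G : ExtGame n) (i : Fin n) (h : List G.Act) : Prop := G.Dec h ∧ G.owner h = i

/-- `c` is (the label of) an information set of player `i`. -/
def IsInfo (G : ExtGame n) (i : Fin n) (c : G.Lab) : Prop :=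
  ∃ h, G.DecOf i h ∧ G.label h = c

/-- A pure strategy of player `i`: an assignment of an available action to each
information set of `i`. -/
def PStrat (G : ExtGame n) (i : Fin n) : Type :=
  {s : G.Lab → G.Act // ∀ h, G.DecOf i h → h ++ [s (G.label h)] ∈ G.H}

instance (G : ExtGame n) (i : Fin n) : Finite (G.PStrat i) := Subtype.finite

noncomputable instance (G : ExtGame n) (i : Fin n) : Fintype (G.PStrat i) :=
  Fintype.ofFinite _

noncomputable instance (G : ExtGame n) (i : Fin n) : DecidableEq (G.PStrat i) :=
  Classical.decEq _

/-- Opponents' pure-strategy profiles. -/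
abbrev OppProf (G : ExtGame n) (i : Fin n) : Type :=
  (j : {j : Fin n // j ≠ i}) → G.PStrat j.val

/-- Combining a strategy for `i` with an opponents' profile. -/
def combine (G : ExtGame n) (i : Fin n) (s : G.PStrat i) (τ : G.OppProf i) :
    (j : Fin n) → G.PStrat j :=
  fun j => if h : j = i then cast (congrArg G.PStrat h.symm) s else τ ⟨j, h⟩

open Classical in
/-- The play of the game from history `h` under profile `sp`, with fuel `f`. -/
def playFrom (G : ExtGame n) (sp : (j : Fin n) → G.PStrat j) :
    ℕ → List G.Act → List G.Act
  | 0, h => h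
  | f + 1, h =>
      if G.Dec h then
        G.playFrom sp f (h ++ [(sp (G.owner h)).val (G.label h)])
      else h

/-- The terminal history reached by the profile `sp`. -/
def outcome (G : ExtGame n) (sp : (j : Fin n) → G.PStrat j) : List G.Act :=
  G.playFrom sp (G.maxLen + 1) []

/-- Player `i`'s utility under the profile `sp`. -/
def U (G : ExtGame n) (i : Fin n) (sp : (j : Fin n) → G.PStrat j) : ℝ :=
  G.payoff i (G.outcome sp)

/-- The profile `sp` reaches the information set `c` of player `i`. -/
def Reaches (G : ExtGame n) (sp : (j : Fin n) → G.PStrat j) (i : Fin n) (c : G.Lab) :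
    Prop :=
  ∃ p, p <+: G.outcome sp ∧ G.DecOf i p ∧ G.label p = c

/-- `Σ'_{σ,I,-i}`: the opponents' profiles in `T` for which `(σ, τ₋ᵢ)` reaches `c`. -/
def ReachSet (G : ExtGame n) (i : Fin n) (σ : G.PStrat i) (c : G.Lab)
    (T : Set (G.OppProf i)) : Set (G.OppProf i) :=
  {τ ∈ T | G.Reaches (G.combine i σ τ) i c}

/-- `Σ'_{σ,σ',I,-i}` for a mixed strategy `m`. -/
def ReachSetMix (G : ExtGame n) (i : Fin n) (σ : G.PStrat i) (m : G.PStrat i → ℝ)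
    (c : G.Lab) (T : Set (G.OppProf i)) : Set (G.OppProf i) :=
  {τ ∈ T | G.Reaches (G.combine i σ τ) i c ∧
    ∀ s, 0 < m s → G.Reaches (G.combine i s τ) i c}

/-- Utility of the mixed strategy `m` of player `i` against the opponents' profile `τ`. -/
def EUmixE (G : ExtGame n) (i : Fin n) (m : G.PStrat i → ℝ) (τ : G.OppProf i) : ℝ :=
  ∑ s : G.PStrat i, m s * G.U i (G.combine i s τ)

/-- `σ` is conditionally dominated on `Σ'_i × T`. -/
def CondDom (G : ExtGame n) (i : Fin n) (σ : G.PStrat i) (T : Set (G.OppProf i)) :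
    Prop :=
  ∃ c, G.IsInfo i c ∧ ∃ m : G.PStrat i → ℝ, IsDist m ∧
    (G.ReachSetMix i σ m c T).Nonempty ∧
    ∀ τ ∈ G.ReachSetMix i σ m c T, G.U i (G.combine i σ τ) < G.EUmixE i m τ

/-- The information set `c'` of player `i` is at or below `c`. -/
def AtOrBelow (G : ExtGame n) (i : Fin n) (c' c : G.Lab) : Prop :=
  ∃ h h', G.DecOf i h ∧ G.DecOf i h' ∧ G.label h' = c ∧ G.label h = c' ∧ h' <+: h

/-- The information set `c'` of player `i` precedes `c`. -/
def Precedes (G : ExtGame n) (i : Fin n) (c' c : G.Lab) : Prop :=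
  ∃ h h', G.DecOf i h ∧ G.DecOf i h' ∧ G.label h = c' ∧ G.label h' = c ∧
    h <+: h' ∧ h ≠ h'

/-- `σ` is conditionally dominated′ on `Σ'_i × T`. -/
def CondDom' (G : ExtGame n) (i : Fin n) (σ : G.PStrat i) (T : Set (G.OppProf i)) :
    Prop :=
  ∃ c, G.IsInfo i c ∧ (G.ReachSet i σ c T).Nonempty ∧
    ∃ m : G.PStrat i → ℝ, IsDist m ∧
      (∀ s, 0 < m s → ∀ c', G.IsInfo i c' → ¬G.AtOrBelow i c' c →
        s.val c' = σ.val c') ∧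
      ∀ τ ∈ G.ReachSet i σ c T, G.U i (G.combine i σ τ) < G.EUmixE i m τ

/-- `σ` is weakly dominated by the mixed strategy `m` with respect to `T`. -/
def WDomE (G : ExtGame n) (i : Fin n) (m : G.PStrat i → ℝ) (σ : G.PStrat i)
    (T : Set (G.OppProf i)) : Prop :=
  (∀ τ ∈ T, G.U i (G.combine i σ τ) ≤ G.EUmixE i m τ) ∧
    ∃ τ ∈ T, G.U i (G.combine i σ τ) < G.EUmixE i m τ

/-- `σ` is an almost-best response conditional on reaching the information set `c` to the
first measure of `L | E`. -/
def AlmostBestAt (G : ExtGame n) (i : Fin n) (σ : G.PStrat i) (c : G.Lab)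
    (L : LPS (G.OppProf i)) (E : Set (G.OppProf i)) : Prop :=
  ∀ σ' : G.PStrat i,
    (∀ c', G.IsInfo i c' → G.Precedes i c' c → σ'.val c' = σ.val c') →
    L.condExp E (fun τ => G.U i (G.combine i σ' τ)) ≤
      L.condExp E (fun τ => G.U i (G.combine i σ τ))

end ExtGame

end

/-!
Perfect recall makes reaching an information set `I` against a fixed opponents' profile `τ`
depend only on player `i`'s own choices before `I`: if `(σ, τ)` reaches `I`, then `(s, τ)` does
iff `s` agrees with `σ` at every information set preceding `I`. So the strategies that can be
mixed in a domination at `I` are exactly those agreeing with `σ` before `I`, and for such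
mixtures `Σ'_{σ,σ',I,-i} = Σ'_{σ,I,-i}`. At each `I` the claim is then Pearce's lemma (a strategy
is a best response to some belief iff no mixture strictly dominates it), which follows from the
minimax theorem for the zero-sum game with payoff `u(s, τ) - u(σ, τ)`.
-/

open Matrix

section Distributions

variable {α : Type*} [Fintype α]

def distOn (E : Set α) : Set (α → ℝ) := {μ | IsDist μ ∧ ∀ a, 0 < μ a → a ∈ E}

theorem single_mem_distOn [DecidableEq α] {E : Set α} {a : α} (ha : a ∈ E) :
    Pi.single a 1 ∈ distOn E := by
  refine ⟨⟨fun b => ?_, by simp⟩, fun b hb => ?_⟩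
  · by_cases h : b = a <;> simp [h]
  · by_cases h : b = a
    · exact h ▸ ha
    · simp [h] at hb

theorem convex_distOn (E : Set α) : Convex ℝ (distOn E) := by
  rintro μ ⟨⟨hμ0, hμ1⟩, hμE⟩ ν ⟨⟨hν0, hν1⟩, hνE⟩ a b ha hb hab
  refine ⟨⟨fun x => ?_, ?_⟩, fun x hx => ?_⟩
  · simp only [Pi.add_apply, Pi.smul_apply, smul_eq_mul]
    have := hμ0 x
    have := hν0 x
    positivity
  · simp [Finset.sum_add_distrib, ← Finset.mul_sum, hμ1, hν1, hab]
  · simp only [Pi.add_apply, Pi.smul_apply, smul_eq_mul] at hx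
    by_contra hxE
    have := mul_nonpos_of_nonneg_of_nonpos ha (not_lt.mp (mt (hμE x) hxE))
    have := mul_nonpos_of_nonneg_of_nonpos hb (not_lt.mp (mt (hνE x) hxE))
    linarith

theorem isCompact_distOn (E : Set α) : IsCompact (distOn E) := by
  have hclosed : IsClosed (distOn E) := by
    have : distOn E = stdSimplex ℝ α ∩ ⋂ a ∈ Eᶜ, {μ | μ a ≤ 0} := by
      ext μ
      simp only [distOn, Set.mem_ofPred_eq, Set.mem_inter_iff, Set.mem_iInter, Set.mem_compl_iff]
      exact and_congr Iff.rfl (forall_congr' fun a => by rw [← not_lt, not_imp_not])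
    rw [this]
    exact (isClosed_stdSimplex ℝ α).inter
      (isClosed_biInter fun a _ => isClosed_le (continuous_apply a) continuous_const)
  exact (isCompact_stdSimplex ℝ α).of_isClosed_subset hclosed fun μ hμ => hμ.1

theorem dotProduct_pos_of_mem_distOn {E : Set α} {μ f : α → ℝ} (hμ : μ ∈ distOn E)
    (hf : ∀ a ∈ E, 0 < f a) : 0 < μ ⬝ᵥ f := by
  obtain ⟨a, ha⟩ : ∃ a, 0 < μ a := by
    by_contra! h
    have : ∑ a, μ a = 0 := Finset.sum_eq_zero fun a _ => le_antisymm (h a) (hμ.1.1 a)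
    linarith [hμ.1.2]
  refine Finset.sum_pos' (fun b _ => ?_) ⟨a, Finset.mem_univ a, mul_pos ha (hf a (hμ.2 a ha))⟩
  rcases (hμ.1.1 b).eq_or_lt with h | h
  · simp [← h]
  · exact mul_nonneg h.le (hf b (hμ.2 b h)).le

theorem dotProduct_nonpos_of_mem_distOn {E : Set α} {μ f : α → ℝ} (hμ : μ ∈ distOn E)
    (hf : ∀ a ∈ E, f a ≤ 0) : μ ⬝ᵥ f ≤ 0 := by
  refine Finset.sum_nonpos fun b _ => ?_
  rcases (hμ.1.1 b).eq_or_lt with h | h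
  · simp [← h]
  · exact mul_nonpos_of_nonneg_of_nonpos h.le (hf b (hμ.2 b h))

end Distributions

section Alternative

variable {ι κ : Type*} [Fintype ι] [Fintype κ] {S : Set ι} {E : Set κ}

theorem exists_mem_distOn_mulVec_nonpos (hS : S.Nonempty) (hE : E.Nonempty)
    (A : Matrix ι κ ℝ) (h : ∀ m ∈ distOn S, ∃ τ ∈ E, (m ᵥ* A) τ ≤ 0) :
    ∃ μ ∈ distOn E, ∀ s ∈ S, (A *ᵥ μ) s ≤ 0 := by
  classical
  obtain ⟨μ, hμ, m, hm, hsaddle⟩ := Sion.exists_isSaddlePointOn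
    (f := fun μ m => m ⬝ᵥ (A *ᵥ μ))
    (⟨_, single_mem_distOn hE.some_mem⟩) (convex_distOn E) (isCompact_distOn E)
    (fun m _ => (((dotProductBilin ℝ ℝ m).comp A.mulVecLin).continuous_of_finiteDimensional
      ).lowerSemicontinuous.lowerSemicontinuousOn _)
    (fun m _ => (((dotProductBilin ℝ ℝ m).comp A.mulVecLin).convexOn (convex_distOn E)
      ).quasiconvexOn)
    (convex_distOn S) (⟨_, single_mem_distOn hS.some_mem⟩) (isCompact_distOn S)
    (fun μ _ => (((dotProductBilin ℝ ℝ).flip (A *ᵥ μ)).continuous_of_finiteDimensional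
      ).upperSemicontinuous.upperSemicontinuousOn _)
    (fun μ _ => (((dotProductBilin ℝ ℝ).flip (A *ᵥ μ)).concaveOn (convex_distOn S)
      ).quasiconcaveOn)
  obtain ⟨τ, hτ, hmτ⟩ := h m hm
  refine ⟨μ, hμ, fun s hs => ?_⟩
  calc (A *ᵥ μ) s = Pi.single s 1 ⬝ᵥ (A *ᵥ μ) := by simp
    _ ≤ m ⬝ᵥ (A *ᵥ Pi.single τ 1) := hsaddle _ (single_mem_distOn hτ) _ (single_mem_distOn hs)
    _ = (m ᵥ* A) τ := by rw [dotProduct_mulVec]; simp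
    _ ≤ 0 := hmτ

theorem exists_bestResponse_iff_not_dominated (hS : S.Nonempty) (hE : E.Nonempty)
    (u : ι → κ → ℝ) (s₀ : ι) :
    (∃ μ ∈ distOn E, ∀ s ∈ S, ∑ τ, μ τ * u s τ ≤ ∑ τ, μ τ * u s₀ τ) ↔
      ¬∃ m ∈ distOn S, ∀ τ ∈ E, u s₀ τ < ∑ s, m s * u s τ := by
  set A : Matrix ι κ ℝ := Matrix.of fun s τ => u s τ - u s₀ τ
  have hrow (μ : κ → ℝ) (s : ι) :
      (A *ᵥ μ) s = ∑ τ, μ τ * u s τ - ∑ τ, μ τ * u s₀ τ := by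
    simp only [A, mulVec, dotProduct, of_apply, ← Finset.sum_sub_distrib]
    exact Finset.sum_congr rfl fun τ _ => by ring
  have hcol (m : ι → ℝ) (hm : m ∈ distOn S) (τ : κ) :
      (m ᵥ* A) τ = ∑ s, m s * u s τ - u s₀ τ := by
    simp only [A, vecMul, dotProduct, of_apply, mul_sub, Finset.sum_sub_distrib,
      ← Finset.sum_mul, hm.1.2, one_mul]
  constructor
  · rintro ⟨μ, hμ, hbest⟩ ⟨m, hm, hdom⟩
    have hpos : 0 < μ ⬝ᵥ (m ᵥ* A) := dotProduct_pos_of_mem_distOn hμ fun τ hτ => by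
      rw [hcol m hm]
      linarith [hdom τ hτ]
    have hnonpos : m ⬝ᵥ (A *ᵥ μ) ≤ 0 := dotProduct_nonpos_of_mem_distOn hm fun s hs => by
      rw [hrow]
      linarith [hbest s hs]
    rw [dotProduct_comm, ← dotProduct_mulVec] at hpos
    linarith
  · intro hnd
    obtain ⟨μ, hμ, hA⟩ := exists_mem_distOn_mulVec_nonpos hS hE A fun m hm => by
      by_contra! hpos
      exact hnd ⟨m, hm, fun τ hτ => by linarith [hpos τ hτ, hcol m hm τ]⟩
    exact ⟨μ, hμ, fun s hs => by linarith [hA s hs, hrow μ s]⟩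

end Alternative

theorem List.IsPrefix.exists_append_singleton_prefix {α : Type*} {l₁ l₂ : List α}
    (h : l₁ <+: l₂) (hne : l₁ ≠ l₂) : ∃ a, l₁ ++ [a] <+: l₂ := by
  obtain ⟨_ | ⟨a, t⟩, rfl⟩ := h
  · simp at hne
  · exact ⟨a, by simp⟩

theorem mem_experGo_iff {Act Lab ι : Type*} [DecidableEq ι] (owner : List Act → ι)
    (label : List Act → Lab) (i : ι) (l : Lab) (a : Act) :
    ∀ pre rest : List Act, (l, a) ∈ experGo owner label i pre rest ↔
      ∃ q, q ++ [a] <+: rest ∧ owner (pre ++ q) = i ∧ label (pre ++ q) = l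
  | pre, [] => by simp [experGo]
  | pre, b :: rest => by
    rw [experGo, List.mem_append, mem_experGo_iff owner label i l a (pre ++ [b]) rest]
    constructor
    · rintro (h | ⟨q, hq, ho, hl⟩)
      · split_ifs at h with ho
        · obtain ⟨rfl, rfl⟩ := Prod.mk.inj (List.mem_singleton.mp h)
          exact ⟨[], by simp, by simpa using ho, by simp⟩
        · simp at h
      · exact ⟨b :: q, by simpa using hq, by simpa using ho, by simpa using hl⟩
    · rintro ⟨q, hq, ho, hl⟩
      rcases q with _ | ⟨c, q⟩
      · obtain rfl : a = b := by simpa using hq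
        left
        simp_all
      · rw [List.cons_append, List.cons_prefix_cons] at hq
        obtain ⟨rfl, hq⟩ := hq
        exact Or.inr ⟨q, hq, by simpa using ho, by simpa using hl⟩

namespace ExtGame

variable {n : ℕ} (G : ExtGame n)

theorem mem_H_of_prefix {h p : List G.Act} (hp : h <+: p) (hH : p ∈ G.H) : h ∈ G.H := by
  induction p using List.reverseRecOn generalizing h with
  | nil => rwa [List.prefix_nil.mp hp]
  | append_singleton q a ih =>
    rcases List.prefix_concat_iff.mp hp with rfl | hq
    · exact hH
    · exact ih hq (G.prefix_closed q a hH)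

theorem dec_of_append_mem {h : List G.Act} {a : G.Act} (hH : h ++ [a] ∈ G.H) : G.Dec h :=
  ⟨G.prefix_closed h a hH, a, hH⟩

section Play

variable {G} (sp : (j : Fin n) → G.PStrat j)

def Follows (p : List G.Act) : Prop :=
  ∀ q a, q ++ [a] <+: p → (sp (G.owner q)).val (G.label q) = a

variable {sp}

theorem Follows.mono {p p' : List G.Act} (hp : p' <+: p) (h : G.Follows sp p) :
    G.Follows sp p' :=
  fun q a hq => h q a (hq.trans hp)

theorem Follows.append_choice {h : List G.Act} (hf : G.Follows sp h) :
    G.Follows sp (h ++ [(sp (G.owner h)).val (G.label h)]) := by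
  intro q a hq
  rcases List.prefix_concat_iff.mp hq with heq | hq
  · obtain ⟨rfl, ha⟩ := List.append_inj' heq rfl
    simpa using ha.symm
  · exact hf q a hq

theorem playFrom_mem {h : List G.Act} (hH : h ∈ G.H) : ∀ f, G.playFrom sp f h ∈ G.H := by
  intro f
  induction f generalizing h with
  | zero => exact hH
  | succ f ih =>
    rw [playFrom]
    split_ifs with hdec
    · exact ih ((sp (G.owner h)).2 h ⟨hdec, rfl⟩)
    · exact hH

theorem follows_playFrom {h : List G.Act} (hf : G.Follows sp h) :
    ∀ f, G.Follows sp (G.playFrom sp f h) := by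
  intro f
  induction f generalizing h with
  | zero => exact hf
  | succ f ih =>
    rw [playFrom]
    split_ifs
    · exact ih hf.append_choice
    · exact hf

theorem prefix_playFrom_self (h : List G.Act) : ∀ f, h <+: G.playFrom sp f h := by
  intro f
  induction f generalizing h with
  | zero => exact List.prefix_rfl
  | succ f ih =>
    rw [playFrom]
    split_ifs
    · exact (List.prefix_append h _).trans (ih _)
    · exact List.prefix_rfl

theorem prefix_playFrom {p : List G.Act} (hp : p ∈ G.H) (hf : G.Follows sp p) :
    ∀ f h, h <+: p → p.length ≤ h.length + f → p <+: G.playFrom sp f h := by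
  intro f
  induction f with
  | zero =>
    intro h hh hlen
    rw [hh.eq_of_length_le (by omega)]
    exact List.prefix_rfl
  | succ f ih =>
    intro h hh hlen
    obtain rfl | hne := eq_or_ne h p
    · exact prefix_playFrom_self h _
    obtain ⟨a, ha⟩ := hh.exists_append_singleton_prefix hne
    have hdec : G.Dec h := G.dec_of_append_mem (G.mem_H_of_prefix ha hp)
    rw [playFrom, if_pos hdec, hf h a ha]
    exact ih _ ha (by simp; omega)

theorem outcome_mem : G.outcome sp ∈ G.H := playFrom_mem G.root_mem _

theorem follows_outcome : G.Follows sp (G.outcome sp) :=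
  follows_playFrom (fun q a hq => by simpa using hq.length_le) _

theorem prefix_outcome {p : List G.Act} (hp : p ∈ G.H) (hf : G.Follows sp p) :
    p <+: G.outcome sp :=
  prefix_playFrom hp hf _ [] List.nil_prefix
    (by simpa using Nat.le_succ_of_le (G.len_bound p hp))

end Play

theorem combine_self (i : Fin n) (s : G.PStrat i) (τ : G.OppProf i) :
    G.combine i s τ i = s := by
  simp [combine]

theorem combine_of_ne (i : Fin n) (s : G.PStrat i) (τ : G.OppProf i) {j : Fin n} (hj : j ≠ i) :
    G.combine i s τ j = τ ⟨j, hj⟩ := by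
  simp [combine, hj]

section Recall

variable {G} {i : Fin n}

def MatchAt (s : G.PStrat i) (p : List G.Act) : Prop :=
  ∀ q a, q ++ [a] <+: p → G.owner q = i → s.val (G.label q) = a

theorem matchAt_iff_experGo (s : G.PStrat i) (p : List G.Act) :
    G.MatchAt s p ↔ ∀ l a, (l, a) ∈ experGo G.owner G.label i [] p → s.val l = a := by
  simp only [mem_experGo_iff, List.nil_append]
  constructor
  · rintro h l a ⟨q, hq, ho, rfl⟩
    exact h q a hq ho
  · exact fun h q a hq ho => h _ a ⟨q, hq, ho, rfl⟩

theorem MatchAt.of_label_eq {s : G.PStrat i} {p p' : List G.Act} (hp : G.DecOf i p)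
    (hp' : G.DecOf i p') (hl : G.label p = G.label p') (h : G.MatchAt s p) :
    G.MatchAt s p' := by
  have hx := G.perfect_recall p p' hp.1.1 hp'.1.1 hp.1.2 hp'.1.2 hl
  rw [hp.2] at hx
  rw [matchAt_iff_experGo] at h ⊢
  rwa [← hx]

theorem matchAt_of_prefix_outcome {s : G.PStrat i} {τ : G.OppProf i} {p : List G.Act}
    (hp : p <+: G.outcome (G.combine i s τ)) : G.MatchAt s p := by
  intro q a hq ho
  have := (follows_outcome.mono hp) q a hq
  rwa [ho, combine_self] at this

theorem prefix_outcome_of_matchAt {σ s : G.PStrat i} {τ : G.OppProf i} {p : List G.Act}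
    (hp : p <+: G.outcome (G.combine i σ τ)) (hs : G.MatchAt s p) :
    p <+: G.outcome (G.combine i s τ) := by
  refine prefix_outcome (G.mem_H_of_prefix hp outcome_mem) fun q a hq => ?_
  by_cases ho : G.owner q = i
  · rw [ho, combine_self]
    exact hs q a hq ho
  · rw [combine_of_ne _ _ _ _ ho, ← G.combine_of_ne i σ τ ho]
    exact (follows_outcome.mono hp) q a hq

def AgreesBefore (c : G.Lab) (s σ : G.PStrat i) : Prop :=
  ∀ c', G.IsInfo i c' → G.Precedes i c' c → s.val c' = σ.val c'

theorem AgreesBefore.refl (c : G.Lab) (σ : G.PStrat i) : G.AgreesBefore c σ σ :=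
  fun _ _ _ => rfl

theorem matchAt_of_agreesBefore {σ s : G.PStrat i} {p : List G.Act} (hp : G.DecOf i p)
    (hσ : G.MatchAt σ p) (hs : G.AgreesBefore (G.label p) s σ) : G.MatchAt s p := by
  intro q a hq ho
  have hdec : G.DecOf i q := ⟨G.dec_of_append_mem (G.mem_H_of_prefix hq hp.1.1), ho⟩
  have hne : q ≠ p := by
    rintro rfl
    simpa using hq.length_le
  rw [hs _ ⟨q, hdec, rfl⟩ ⟨q, p, hdec, hp, rfl, rfl, (List.prefix_append q [a]).trans hq, hne⟩]
  exact hσ q a hq ho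

theorem agreesBefore_of_matchAt {σ s : G.PStrat i} {p : List G.Act} (hp : G.DecOf i p)
    (hσ : G.MatchAt σ p) (hs : G.MatchAt s p) : G.AgreesBefore (G.label p) s σ := by
  rintro _ - ⟨q, p', hq, hp', rfl, hl, hqp', hne⟩
  obtain ⟨a, ha⟩ := hqp'.exists_append_singleton_prefix hne
  rw [hs.of_label_eq hp hp' hl.symm q a ha hq.2, hσ.of_label_eq hp hp' hl.symm q a ha hq.2]

theorem reaches_iff_agreesBefore {σ s : G.PStrat i} {τ : G.OppProf i} {c : G.Lab}
    (hσ : G.Reaches (G.combine i σ τ) i c) :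
    G.Reaches (G.combine i s τ) i c ↔ G.AgreesBefore c s σ := by
  obtain ⟨p, hpσ, hp, rfl⟩ := hσ
  have hσp : G.MatchAt σ p := matchAt_of_prefix_outcome hpσ
  constructor
  · rintro ⟨q, hqs, hq, hl⟩
    exact agreesBefore_of_matchAt hp hσp
      ((matchAt_of_prefix_outcome hqs).of_label_eq hq hp hl)
  · exact fun hs => ⟨p, prefix_outcome_of_matchAt hpσ (matchAt_of_agreesBefore hp hσp hs), hp, rfl⟩

end Recall

section Domination

variable {G} {i : Fin n} {σ : G.PStrat i} {c : G.Lab} {T : Set (G.OppProf i)}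

theorem reachSetMix_eq_reachSet {m : G.PStrat i → ℝ}
    (hm : ∀ s, 0 < m s → G.AgreesBefore c s σ) :
    G.ReachSetMix i σ m c T = G.ReachSet i σ c T :=
  Set.ext fun _ => ⟨fun h => ⟨h.1, h.2.1⟩,
    fun h => ⟨h.1, h.2, fun s hs => (reaches_iff_agreesBefore h.2).2 (hm s hs)⟩⟩

theorem condDom_iff :
    G.CondDom i σ T ↔ ∃ c, G.IsInfo i c ∧ (G.ReachSet i σ c T).Nonempty ∧
      ∃ m ∈ distOn {s | G.AgreesBefore c s σ},
        ∀ τ ∈ G.ReachSet i σ c T, G.U i (G.combine i σ τ) < G.EUmixE i m τ := by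
  constructor
  · rintro ⟨c, hc, m, hm, ⟨τ₀, hτ₀⟩, hdom⟩
    have hagree : ∀ s, 0 < m s → G.AgreesBefore c s σ := fun s hs =>
      (reaches_iff_agreesBefore hτ₀.2.1).1 (hτ₀.2.2 s hs)
    rw [reachSetMix_eq_reachSet hagree] at hτ₀ hdom
    exact ⟨c, hc, ⟨τ₀, hτ₀⟩, m, ⟨hm, hagree⟩, hdom⟩
  · rintro ⟨c, hc, hne, m, ⟨hm, hagree⟩, hdom⟩
    refine ⟨c, hc, m, hm, ?_⟩
    rw [reachSetMix_eq_reachSet hagree]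
    exact ⟨hne, hdom⟩

end Domination

end ExtGame

theorem not_condDom_iff_conditional_best_response_general {n : ℕ} (G : ExtGame n) (i : Fin n)
    (T : Set (G.OppProf i)) (σ : G.PStrat i) :
    ¬G.CondDom i σ T ↔
      ∀ c, G.IsInfo i c →
        G.ReachSet i σ c T = ∅ ∨
        ∃ μ : G.OppProf i → ℝ, IsDist μ ∧ (∀ τ, 0 < μ τ → τ ∈ G.ReachSet i σ c T) ∧
          ∀ σ' : G.PStrat i,
            (∀ c', G.IsInfo i c' → G.Precedes i c' c → σ'.val c' = σ.val c') →
            ∑ τ : G.OppProf i, μ τ * G.U i (G.combine i σ' τ) ≤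
              ∑ τ : G.OppProf i, μ τ * G.U i (G.combine i σ τ) := by
  simp only [ExtGame.condDom_iff, not_exists, not_and]
  refine forall_congr' fun c => imp_congr_right fun _ => ?_
  rcases (G.ReachSet i σ c T).eq_empty_or_nonempty with hE | hE
  · simp [hE]
  · have := exists_bestResponse_iff_not_dominated (S := {s | G.AgreesBefore c s σ})
      ⟨σ, ExtGame.AgreesBefore.refl c σ⟩ hE (fun s τ => G.U i (G.combine i s τ)) σ
    simp only [not_exists, not_and] at this
    rw [or_iff_right hE.ne_empty, imp_iff_right hE]
    exact this.symm.trans (exists_congr fun μ => and_assoc)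

/-- `σ` is not conditionally dominated on `Σ'` iff at each information set `I`
of player `i` that is reachable, `σ` is a best response conditional on reaching `I` to some
belief on `Σ'_{σ,I,-i}`. -/
theorem not_condDom_iff_conditional_best_response {n : ℕ} (G : ExtGame n) (i : Fin n)
    (Ti : Set (G.PStrat i)) (T : Set (G.OppProf i)) (σ : G.PStrat i) (hσ : σ ∈ Ti) :
    ¬G.CondDom i σ T ↔
      ∀ c, G.IsInfo i c →
        G.ReachSet i σ c T = ∅ ∨
        ∃ μ : G.OppProf i → ℝ, IsDist μ ∧ (∀ τ, 0 < μ τ → τ ∈ G.ReachSet i σ c T) ∧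
          ∀ σ' : G.PStrat i,
            (∀ c', G.IsInfo i c' → G.Precedes i c' c → σ'.val c' = σ.val c') →
            ∑ τ : G.OppProf i, μ τ * G.U i (G.combine i σ' τ) ≤
              ∑ τ : G.OppProf i, μ τ * G.U i (G.combine i σ τ) :=
  not_condDom_iff_conditional_best_response_general G i T σ
end
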